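/- arXiv:2211.13543 — 11 statements merged into one kernel-verified Lean document; each statement's English description precedes it below -/
import Mathlib

section
/- Monotonicity of truth: for a simplicial model C and faces X ⊆ Y, if C, X ⊨ φ then C, Y ⊨ φ. -/
structure SimplicialModel (A : Type) (P : A → Type) where
  V : Type
  C : Set (Finset V)
  C_nonempty : C.Nonempty
  mem_nonempty : ∀ X ∈ C, X.Nonempty
  downward : ∀ X ∈ C, ∀ Y : Finset V, Y.Nonempty → Y ⊆ X → Y ∈ C
  vertex_mem : ∀ v : V, ({v} : Finset V) ∈ C
  chi : V → A
  chromatic : ∀ X ∈ C, ∀ v ∈ X, ∀ u ∈ X, chi v = chi u → v = u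
  val : V → Set (Σ a : A, P a)
  val_local : ∀ v : V, ∀ s ∈ val v, s.1 = chi v

inductive Formula (A : Type) (P : A → Type) : Type where
  | var : (a : A) → P a → Formula A P
  | neg : Formula A P → Formula A P
  | and : Formula A P → Formula A P → Formula A P
  | know : A → Formula A P → Formula A P

/-- `a ∈ χ(X ∩ Y)`: the faces `X` and `Y` share an `a`-colored vertex. -/
def adj {A : Type} {P : A → Type} (M : SimplicialModel A P) (a : A)
    (X Y : Finset M.V) : Prop :=
  ∃ v, v ∈ X ∧ v ∈ Y ∧ M.chi v = a

/-- The definability relation `C, X ⋈ φ`. -/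
def Defin {A : Type} {P : A → Type} (M : SimplicialModel A P) :
    Formula A P → Finset M.V → Prop
  | .var a _, X => ∃ v ∈ X, M.chi v = a
  | .neg φ, X => Defin M φ X
  | .and φ ψ, X => Defin M φ X ∧ Defin M ψ X
  | .know a φ, X => ∃ Y ∈ M.C, adj M a X Y ∧ Defin M φ Y

/-- The truth relation `C, X ⊨ φ`. -/
def Truth {A : Type} {P : A → Type} (M : SimplicialModel A P) :
    Formula A P → Finset M.V → Prop
  | .var a p, X => ∃ v ∈ X, (⟨a, p⟩ : Σ a : A, P a) ∈ M.val v
  | .neg φ, X => Defin M (.neg φ) X ∧ ¬ Truth M φ X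
  | .and φ ψ, X => Truth M φ X ∧ Truth M ψ X
  | .know a φ, X => Defin M (.know a φ) X ∧
      ∀ Y ∈ M.C, adj M a X Y → Defin M φ Y → Truth M φ Y

/-- Implication `φ → ψ` defined as `¬(φ ∧ ¬ψ)`. -/
def Formula.impl {A : Type} {P : A → Type} (φ ψ : Formula A P) : Formula A P :=
  .neg (.and φ (.neg ψ))

/-- Disjunction `φ ∨ ψ` defined as `¬(¬φ ∧ ¬ψ)`. -/
def Formula.or {A : Type} {P : A → Type} (φ ψ : Formula A P) : Formula A P :=
  .neg (.and (.neg φ) (.neg ψ))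

theorem defin_monotone {A : Type} {P : A → Type}
    (M : SimplicialModel A P) (φ : Formula A P) :
    ∀ X Y : Finset M.V, X ⊆ Y → Defin M φ X → Defin M φ Y := by
  induction φ with
  | var a p =>
    rintro X Y hXY ⟨v, hv, hchi⟩; exact ⟨v, hXY hv, hchi⟩
  | neg φ ih => exact fun X Y hXY h => ih X Y hXY h
  | and φ ψ ihφ ihψ =>
    rintro X Y hXY ⟨h1, h2⟩; exact ⟨ihφ X Y hXY h1, ihψ X Y hXY h2⟩
  | know a φ ih =>
    rintro X Y hXY ⟨Z, hZ, ⟨v, hvX, hvZ, hchi⟩, hd⟩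
    exact ⟨Z, hZ, ⟨v, hXY hvX, hvZ, hchi⟩, hd⟩

theorem truth_mono_aux {A : Type} {P : A → Type}
    (M : SimplicialModel A P) (φ : Formula A P) :
    ∀ X Y : Finset M.V, X ∈ M.C → Y ∈ M.C → X ⊆ Y →
      (Truth M φ X → Truth M φ Y) ∧
      (Defin M φ X → Truth M φ Y → Truth M φ X) := by
  induction φ with
  | var a p =>
    intro X Y hX hY hXY
    constructor
    · rintro ⟨v, hv, hval⟩; exact ⟨v, hXY hv, hval⟩
    · rintro ⟨v, hv, hchi⟩ ⟨u, hu, hval⟩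
      have ha : M.chi u = a := (M.val_local u ⟨a, p⟩ hval).symm
      have : v = u := M.chromatic Y hY v (hXY hv) u hu (by rw [hchi, ha])
      exact ⟨v, hv, this ▸ hval⟩
  | neg φ ih =>
    intro X Y hX hY hXY
    obtain ⟨up, down⟩ := ih X Y hX hY hXY
    constructor
    · rintro ⟨hd, hnt⟩
      exact ⟨defin_monotone M φ X Y hXY hd, fun ht => hnt (down hd ht)⟩
    · rintro hd ⟨_, hnt⟩
      exact ⟨hd, fun ht => hnt (up ht)⟩
  | and φ ψ ihφ ihψ =>
    intro X Y hX hY hXY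
    obtain ⟨upφ, downφ⟩ := ihφ X Y hX hY hXY
    obtain ⟨upψ, downψ⟩ := ihψ X Y hX hY hXY
    exact ⟨fun ⟨h1, h2⟩ => ⟨upφ h1, upψ h2⟩,
      fun ⟨d1, d2⟩ ⟨h1, h2⟩ => ⟨downφ d1 h1, downψ d2 h2⟩⟩
  | know a φ ih =>
    intro X Y hX hY hXY
    constructor
    · rintro ⟨hd, ht⟩
      refine ⟨defin_monotone M _ X Y hXY hd, ?_⟩
      obtain ⟨W, hW, ⟨v, hvX, hvW, hchi⟩, _⟩ := hd
      rintro Z hZ ⟨u, huY, huZ, hchu⟩ hdZ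
      have : v = u := M.chromatic Y hY v (hXY hvX) u huY (by rw [hchi, hchu])
      exact ht Z hZ ⟨v, hvX, this ▸ huZ, hchi⟩ hdZ
    · rintro hd ⟨_, ht⟩
      refine ⟨hd, fun Z hZ hadj hdZ => ?_⟩
      obtain ⟨u, huX, huZ, hchu⟩ := hadj
      exact ht Z hZ ⟨u, hXY huX, huZ, hchu⟩ hdZ

/-- Monotonicity of truth along face inclusion. -/
theorem truth_monotone {A : Type} {P : A → Type}
    (M : SimplicialModel A P) (X Y : Finset M.V) (hX : X ∈ M.C) (hY : Y ∈ M.C)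
    (hXY : X ⊆ Y) (φ : Formula A P) (h : Truth M φ X) : Truth M φ Y :=
  ((truth_mono_aux M φ X Y hX hY hXY).1) h
end

section
/- C, X ⊨ ¬K_a φ if and only if there exists a face Y with a ∈ χ(X∩Y) and C, Y ⊨ ¬φ. -/
/-- `C,X ⊨ ¬K_a φ` iff some `a`-adjacent face makes `¬φ` true. -/
theorem truth_neg_know_iff {A : Type} {P : A → Type}
    (M : SimplicialModel A P) (X : Finset M.V) (hX : X ∈ M.C)
    (a : A) (φ : Formula A P) :
    Truth M (.neg (.know a φ)) X ↔
      ∃ Y ∈ M.C, adj M a X Y ∧ Truth M (.neg φ) Y := by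
  constructor
  · rintro ⟨hd, hnt⟩
    simp only [Truth, not_and, not_forall] at hnt
    obtain ⟨Y, hY, hadj, hdef, hnt⟩ := hnt hd
    exact ⟨Y, hY, hadj, hdef, hnt⟩
  · rintro ⟨Y, hY, hadj, hdef, hnt⟩
    refine ⟨⟨Y, hY, hadj, hdef⟩, ?_⟩
    rintro ⟨_, h⟩
    exact hnt (h Y hY hadj hdef)
end

section
/- Validity on facets equals validity on faces: a formula φ is true in every facet of every simplicial model where it is defined if and only if φ is true in every face of every simplicial model where it is defined. -/
/-- A facet is a maximal face of the simplicial complex. -/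
def IsFacet {A : Type} {P : A → Type} (M : SimplicialModel A P)
    (X : Finset M.V) : Prop :=
  X ∈ M.C ∧ ∀ Y ∈ M.C, X ⊆ Y → Y = X

lemma card_le_card_A {A : Type} [Fintype A] {P : A → Type}
    (M : SimplicialModel A P) {X : Finset M.V} (hX : X ∈ M.C) :
    X.card ≤ Fintype.card A := by
  classical
  have := Finset.card_le_card_of_injOn M.chi
    (fun v _ => Finset.mem_univ (M.chi v))
    (fun u hu v hv h => M.chromatic X hX u hu v hv h)
  simpa using this

lemma exists_facet_aux {A : Type} [Fintype A] {P : A → Type}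
    (M : SimplicialModel A P) :
    ∀ k, ∀ X ∈ M.C, Fintype.card A - X.card ≤ k →
      ∃ Y, IsFacet M Y ∧ X ⊆ Y := by
  intro k
  induction k with
  | zero =>
    intro X hX h
    refine ⟨X, ⟨hX, fun Y hY hXY => ?_⟩, subset_rfl⟩
    have h1 : Y.card ≤ X.card := le_trans (card_le_card_A M hY) (by omega)
    exact (Finset.eq_of_subset_of_card_le hXY h1).symm
  | succ k ih =>
    intro X hX h
    by_cases hf : ∀ Y ∈ M.C, X ⊆ Y → Y = X
    · exact ⟨X, ⟨hX, hf⟩, subset_rfl⟩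
    · push_neg at hf
      obtain ⟨Y, hY, hXY, hne⟩ := hf
      have hss : X ⊂ Y := ssubset_of_subset_of_ne hXY (Ne.symm hne)
      have hc : X.card < Y.card := Finset.card_lt_card hss
      obtain ⟨Z, hZ, hYZ⟩ := ih Y hY (by omega)
      exact ⟨Z, hZ, hXY.trans hYZ⟩

lemma exists_facet {A : Type} [Fintype A] {P : A → Type}
    (M : SimplicialModel A P) {X : Finset M.V} (hX : X ∈ M.C) :
    ∃ Y, IsFacet M Y ∧ X ⊆ Y :=
  exists_facet_aux M _ X hX le_rfl

lemma defin_mono {A : Type} {P : A → Type} (M : SimplicialModel A P)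
    (φ : Formula A P) : ∀ {X Y : Finset M.V}, X ⊆ Y →
      Defin M φ X → Defin M φ Y := by
  induction φ with
  | var a p =>
    rintro X Y h ⟨v, hv, hc⟩
    exact ⟨v, h hv, hc⟩
  | neg φ ih =>
    intro X Y h hd
    exact ih h hd
  | and φ ψ ih1 ih2 =>
    rintro X Y h ⟨h1, h2⟩
    exact ⟨ih1 h h1, ih2 h h2⟩
  | know a φ ih =>
    rintro X Y h ⟨Z, hZ, ⟨v, hvX, hvZ, hc⟩, hd⟩
    exact ⟨Z, hZ, ⟨v, h hvX, hvZ, hc⟩, hd⟩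

lemma truth_iff {A : Type} {P : A → Type} (M : SimplicialModel A P)
    (φ : Formula A P) : ∀ {X Y : Finset M.V}, X ∈ M.C → Y ∈ M.C → X ⊆ Y →
      Defin M φ X → (Truth M φ X ↔ Truth M φ Y) := by
  induction φ with
  | var a p =>
    rintro X Y hX hY hXY ⟨u, hu, hcu⟩
    constructor
    · rintro ⟨v, hv, hval⟩
      exact ⟨v, hXY hv, hval⟩
    · rintro ⟨v, hv, hval⟩
      have hcv : M.chi v = a := (M.val_local v _ hval).symm
      have huv : u = v :=
        M.chromatic Y hY u (hXY hu) v hv (hcu.trans hcv.symm)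
      exact ⟨u, hu, huv ▸ hval⟩
  | neg φ ih =>
    intro X Y hX hY hXY hd
    have hdφ : Defin M φ X := hd
    constructor
    · rintro ⟨_, ht⟩
      exact ⟨defin_mono M φ hXY hdφ,
        fun h => ht ((ih hX hY hXY hdφ).mpr h)⟩
    · rintro ⟨_, ht⟩
      exact ⟨hd, fun h => ht ((ih hX hY hXY hdφ).mp h)⟩
  | and φ ψ ih1 ih2 =>
    rintro X Y hX hY hXY ⟨hd1, hd2⟩
    constructor
    · rintro ⟨h1, h2⟩
      exact ⟨(ih1 hX hY hXY hd1).mp h1, (ih2 hX hY hXY hd2).mp h2⟩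
    · rintro ⟨h1, h2⟩
      exact ⟨(ih1 hX hY hXY hd1).mpr h1, (ih2 hX hY hXY hd2).mpr h2⟩
  | know a φ ih =>
    intro X Y hX hY hXY hd
    constructor
    · rintro ⟨_, ht⟩
      refine ⟨defin_mono M _ hXY hd, fun Z hZ hadj hdZ => ?_⟩
      obtain ⟨W, hW, ⟨v, hvX, hvW, hcv⟩, _⟩ := hd
      obtain ⟨u, huY, huZ, hcu⟩ := hadj
      have : v = u := M.chromatic Y hY v (hXY hvX) u huY (hcv.trans hcu.symm)
      exact ht Z hZ ⟨v, hvX, this ▸ huZ, hcv⟩ hdZ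
    · rintro ⟨_, ht⟩
      refine ⟨hd, fun Z hZ ⟨v, hvX, hvZ, hcv⟩ hdZ => ?_⟩
      exact ht Z hZ ⟨v, hXY hvX, hvZ, hcv⟩ hdZ

/-- Validity on facets equals validity on all faces. -/
theorem valid_facets_iff_valid_faces {A : Type} [Fintype A] {P : A → Type}
    (φ : Formula A P) :
    (∀ (M : SimplicialModel A P) (X : Finset M.V),
        IsFacet M X → Defin M φ X → Truth M φ X) ↔
    (∀ (M : SimplicialModel A P), ∀ X ∈ M.C, Defin M φ X → Truth M φ X) := by
  constructor
  · intro h M X hX hd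
    obtain ⟨Y, hYf, hXY⟩ := exists_facet M hX
    exact (truth_iff M φ hX hYf.1 hXY hd).mpr
      (h M Y hYf (defin_mono M φ hXY hd))
  · intro h M X hX hd
    exact h M X hX.1 hd
end

section
/- Raising to K_a preserves definability consequence: if for all models and faces, definability of all formulas in K_aΓ ∪ {φ} implies definability of K_a ψ, then definability of all formulas in K_aΓ ∪ {K_a φ} implies definability of K_a ψ (for finite Γ). -/
/-- Raising to `K_a` preserves definability consequence:
if `K_aΓ, φ ⋉ K_a ψ` then `K_aΓ, K_a φ ⋉ K_a ψ`. -/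
theorem raise_know_defin_consequence {A : Type} {P : A → Type}
    (a : A) (φ ψ : Formula A P) (Γ : Finset (Formula A P))
    (h : ∀ (M : SimplicialModel A P), ∀ X ∈ M.C,
        (∀ θ ∈ Γ, Defin M (.know a θ) X) → Defin M φ X →
          Defin M (.know a ψ) X) :
    ∀ (M : SimplicialModel A P), ∀ X ∈ M.C,
      (∀ θ ∈ Γ, Defin M (.know a θ) X) → Defin M (.know a φ) X →
        Defin M (.know a ψ) X := by
  intro M X hX hΓ hKφ
  obtain ⟨Y, hY, ⟨v, hvX, hvY, hva⟩, hφY⟩ := hKφ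
  have hKψY : Defin M (.know a ψ) Y := by
    apply h M Y hY _ hφY
    intro θ hθ
    obtain ⟨Z, hZ, ⟨u, huX, huZ, hua⟩, hθZ⟩ := hΓ θ hθ
    have : u = v := M.chromatic X hX u huX v hvX (hua.trans hva.symm)
    exact ⟨Z, hZ, ⟨v, hvY, this ▸ huZ, hva⟩, hθZ⟩
  obtain ⟨W, hW, ⟨w, hwY, hwW, hwa⟩, hψW⟩ := hKψY
  have : w = v := M.chromatic Y hY w hwY v hvY (hwa.trans hva.symm)
  exact ⟨W, hW, ⟨v, hvX, this ▸ hwW, hva⟩, hψW⟩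
end

section
/- The normality axiom K fails: with at least three agents there exist a simplicial model C, a face X, and formulas φ, ψ such that K_a(φ→ψ) → (K_a φ → K_a ψ) is defined at X but false at X. -/
/-- Failure of the normality axiom K with at least three agents: there are a model,
a face, and formulas where `K_a(φ→ψ) → (K_a φ → K_a ψ)` is defined but false. -/
theorem normality_fails {A : Type} {P : A → Type} (a b c : A)
    (hab : a ≠ b) (hac : a ≠ c) (hbc : b ≠ c) (pb : P b) (pc : P c) :
    ∃ (M : SimplicialModel A P) (X : Finset M.V) (φ ψ : Formula A P),
      X ∈ M.C ∧
      Defin M (Formula.impl (.know a (Formula.impl φ ψ))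
        (Formula.impl (.know a φ) (.know a ψ))) X ∧
      Truth M (.neg (Formula.impl (.know a (Formula.impl φ ψ))
        (Formula.impl (.know a φ) (.know a ψ)))) X := by
  classical
  -- vertices: 0 = a (shared), 1 = b (in X), 2 = b (in Y), 3 = c (in Y)
  set χ : Fin 4 → A := ![a, b, b, c] with hχ
  set val : Fin 4 → Set (Σ a : A, P a) :=
    fun v => if v = 2 then {⟨b, pb⟩} else if v = 3 then {⟨c, pc⟩} else ∅ with hval
  set XX : Finset (Fin 4) := {0, 1} with hXX
  set YY : Finset (Fin 4) := {0, 2, 3} with hYY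
  set CC : Set (Finset (Fin 4)) := {S | S.Nonempty ∧ (S ⊆ XX ∨ S ⊆ YY)} with hCC
  have hchi0 : χ 0 = a := rfl
  have hchi1 : χ 1 = b := rfl
  have hchi2 : χ 2 = b := rfl
  have hchi3 : χ 3 = c := rfl
  set M : SimplicialModel A P :=
    { V := Fin 4
      C := CC
      C_nonempty := ⟨XX, ⟨⟨0, by decide⟩, Or.inl (by decide)⟩⟩
      mem_nonempty := fun X hX => hX.1
      downward := fun X hX Y hYne hYX =>
        ⟨hYne, hX.2.imp (fun h => hYX.trans h) (fun h => hYX.trans h)⟩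
      vertex_mem := by
        intro v
        refine ⟨⟨v, by simp⟩, ?_⟩
        fin_cases v
        · exact Or.inl (by decide)
        · exact Or.inl (by decide)
        · exact Or.inr (by decide)
        · exact Or.inr (by decide)
      chi := χ
      chromatic := by
        intro S hS v hv u hu hvu
        rcases hS.2 with hsub | hsub
        · have hv' : v = 0 ∨ v = 1 := by
            have := hsub hv; simp [hXX] at this; tauto
          have hu' : u = 0 ∨ u = 1 := by
            have := hsub hu; simp [hXX] at this; tauto
          rcases hv' with rfl | rfl <;> rcases hu' with rfl | rfl <;>
              simp only [hchi0, hchi1] at hvu <;> try rfl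
          · exact absurd hvu hab
          · exact absurd hvu.symm hab
        · have hv' : v = 0 ∨ v = 2 ∨ v = 3 := by
            have := hsub hv; simp [hYY] at this; tauto
          have hu' : u = 0 ∨ u = 2 ∨ u = 3 := by
            have := hsub hu; simp [hYY] at this; tauto
          rcases hv' with rfl | rfl | rfl <;> rcases hu' with rfl | rfl | rfl <;>
              simp only [hchi0, hchi1, hchi2, hchi3] at hvu <;> try rfl
          · exact absurd hvu hab
          · exact absurd hvu hac
          · exact absurd hvu.symm hab
          · exact absurd hvu hbc
          · exact absurd hvu.symm hac
          · exact absurd hvu.symm hbc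
      val := val
      val_local := by
        intro v s hs
        fin_cases v
        · simp only [hval] at hs
          rw [if_neg (by decide), if_neg (by decide)] at hs
          exact absurd hs (Set.notMem_empty s)
        · simp only [hval] at hs
          rw [if_neg (by decide), if_neg (by decide)] at hs
          exact absurd hs (Set.notMem_empty s)
        · simp only [hval] at hs
          rw [if_pos (by decide)] at hs
          rw [Set.mem_singleton_iff] at hs
          rw [hs]; exact hchi2.symm
        · simp only [hval] at hs
          rw [if_neg (by decide), if_pos (by decide)] at hs
          rw [Set.mem_singleton_iff] at hs
          rw [hs]; exact hchi3.symm
      } with hM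
  -- basic facts
  have hXC : XX ∈ M.C := ⟨⟨0, by rw [hXX]; decide⟩, Or.inl le_rfl⟩
  have hYC : YY ∈ M.C := ⟨⟨0, by rw [hYY]; decide⟩, Or.inr le_rfl⟩
  have h0X : (0 : Fin 4) ∈ XX := by rw [hXX]; decide
  have h0Y : (0 : Fin 4) ∈ YY := by rw [hYY]; decide
  have h2Y : (2 : Fin 4) ∈ YY := by rw [hYY]; decide
  have h3Y : (3 : Fin 4) ∈ YY := by rw [hYY]; decide
  have h1X : (1 : Fin 4) ∈ XX := by rw [hXX]; decide
  have adjXY : adj M a XX YY := ⟨0, h0X, h0Y, hchi0⟩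
  have adjXX : adj M a XX XX := ⟨0, h0X, h0X, hchi0⟩
  set φ : Formula A P := .var c pc with hφ
  set ψ : Formula A P := .var b pb with hψ
  have hDφY : Defin M φ YY := ⟨3, h3Y, hchi3⟩
  have hDψY : Defin M ψ YY := ⟨2, h2Y, hchi2⟩
  have hDψX : Defin M ψ XX := ⟨1, h1X, hchi1⟩
  have hMchi : M.chi = χ := rfl
  have hMval : M.val = val := rfl
  have hval2 : (⟨b, pb⟩ : Σ a : A, P a) ∈ M.val 2 := by
    rw [hMval, hval]
    simp only [if_pos (show (2 : Fin 4) = 2 from rfl)]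
    exact Set.mem_singleton _
  have hval3 : (⟨c, pc⟩ : Σ a : A, P a) ∈ M.val 3 := by
    rw [hMval, hval]
    simp only [if_neg (show ¬ (3 : Fin 4) = 2 by decide),
      if_pos (show (3 : Fin 4) = 3 from rfl)]
    exact Set.mem_singleton _
  -- any face definable for φ (resp. containing a b-vertex inside YY) behaves well
  have memY : ∀ v : Fin 4, v ∈ YY → v = 0 ∨ v = 2 ∨ v = 3 := by
    intro v hv; rw [hYY] at hv; fin_cases hv <;> simp
  have memX : ∀ v : Fin 4, v ∈ XX → v = 0 ∨ v = 1 := by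
    intro v hv; rw [hXX] at hv; fin_cases hv <;> simp
  have lemA : ∀ S ∈ M.C, Defin M φ S → (3 : Fin 4) ∈ S ∧ S ⊆ YY := by
    intro S hS hD
    obtain ⟨v, hvS, hvc⟩ := hD
    rw [hMchi] at hvc
    rcases hS.2 with hsub | hsub
    · exfalso
      rcases memX v (hsub hvS) with rfl | rfl
      · rw [hchi0] at hvc; exact hac hvc
      · rw [hchi1] at hvc; exact hbc hvc
    · refine ⟨?_, hsub⟩
      rcases memY v (hsub hvS) with rfl | rfl | rfl
      · rw [hchi0] at hvc; exact absurd hvc hac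
      · rw [hchi2] at hvc; exact absurd hvc hbc
      · exact hvS
  have lemB : ∀ S : Finset (Fin 4), S ⊆ YY → Defin M ψ S → (2 : Fin 4) ∈ S := by
    intro S hsub hD
    obtain ⟨v, hvS, hvb⟩ := hD
    rw [hMchi] at hvb
    rcases memY v (hsub hvS) with rfl | rfl | rfl
    · rw [hchi0] at hvb; exact absurd hvb hab
    · exact hvS
    · rw [hchi3] at hvb; exact absurd hvb.symm hbc
  have hTφ : ∀ S : Finset (Fin 4), (3 : Fin 4) ∈ S → Truth M φ S :=
    fun S h3 => ⟨3, h3, hval3⟩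
  have hTψ : ∀ S : Finset (Fin 4), (2 : Fin 4) ∈ S → Truth M ψ S :=
    fun S h2 => ⟨2, h2, hval2⟩
  have hNotψX : ¬ Truth M ψ XX := by
    rintro ⟨v, hvX, hmem⟩
    rw [hMval, hval] at hmem
    rcases memX v hvX with rfl | rfl
    · simp only [if_neg (show ¬ (0 : Fin 4) = 2 by decide),
        if_neg (show ¬ (0 : Fin 4) = 3 by decide)] at hmem
      exact hmem
    · simp only [if_neg (show ¬ (1 : Fin 4) = 2 by decide),
        if_neg (show ¬ (1 : Fin 4) = 3 by decide)] at hmem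
      exact hmem
  -- definability of the full formula
  have hDall : Defin M (Formula.impl (.know a (Formula.impl φ ψ))
      (Formula.impl (.know a φ) (.know a ψ))) XX := by
    refine ⟨⟨YY, hYC, adjXY, hDφY, hDψY⟩, ⟨YY, hYC, adjXY, hDφY⟩, XX, hXC, adjXX, hDψX⟩
  -- truth of K_a (φ → ψ) at X
  have hTKimpl : Truth M (.know a (Formula.impl φ ψ)) XX := by
    refine ⟨⟨YY, hYC, adjXY, hDφY, hDψY⟩, ?_⟩
    intro S hS _ hD
    obtain ⟨hDφS, hDψS⟩ := hD
    have hsub := (lemA S hS hDφS).2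
    have h2S := lemB S hsub hDψS
    refine ⟨⟨hDφS, hDψS⟩, ?_⟩
    rintro ⟨_, _, hnT⟩
    exact hnT (hTψ S h2S)
  -- truth of K_a φ at X
  have hTKφ : Truth M (.know a φ) XX := by
    refine ⟨⟨YY, hYC, adjXY, hDφY⟩, ?_⟩
    intro S hS _ hD
    exact hTφ S (lemA S hS hD).1
  -- falsity of K_a ψ at X
  have hNotKψ : ¬ Truth M (.know a ψ) XX := by
    rintro ⟨_, h⟩
    exact hNotψX (h XX hXC adjXX hDψX)
  refine ⟨M, XX, φ, ψ, hXC, hDall, hDall, ?_⟩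
  -- ¬ Truth of the implication formula at X
  rintro ⟨_, hnT⟩
  refine hnT ⟨hTKimpl, ⟨⟨YY, hYC, adjXY, hDφY⟩, XX, hXC, adjXX, hDψX⟩, ?_⟩
  rintro ⟨_, hnT2⟩
  exact hnT2 ⟨hTKφ, ⟨XX, hXC, adjXX, hDψX⟩, hNotKψ⟩
end

section
/- The locality axiom is valid: for every agent a, variable p_a ∈ P_a, simplicial model C and face X, if C,X ⋈ K_a p_a ∨ K_a ¬p_a then C,X ⊨ K_a p_a ∨ K_a ¬p_a. -/
/-- The locality axiom `K_a p_a ∨ K_a ¬p_a` is valid. -/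
theorem locality_valid {A : Type} {P : A → Type}
    (M : SimplicialModel A P) (X : Finset M.V) (hX : X ∈ M.C)
    (a : A) (p : P a)
    (hD : Defin M (Formula.or (.know a (.var a p)) (.know a (.neg (.var a p)))) X) :
    Truth M (Formula.or (.know a (.var a p)) (.know a (.neg (.var a p)))) X := by
  refine ⟨hD, ?_⟩
  rintro ⟨⟨h1, hnt1⟩, ⟨-, h2⟩⟩
  -- h1 : Defin M (K_a p) X, h2 : ¬ Truth M (K_a ¬p) X
  obtain ⟨Y, hY, ⟨v, hvX, hvY, hva⟩, u, huY, hua⟩ := h1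
  have huv : u = v := M.chromatic Y hY u huY v hvY (hua.trans hva.symm)
  subst huv
  -- u ∈ X ∩ Y, chi u = a
  -- key: for any Z ∈ C adjacent to X, the a-vertex of Z is u
  have key : ∀ Z ∈ M.C, adj M a X Z → ∀ w ∈ Z, M.chi w = a → w = u := by
    rintro Z hZ ⟨v', hv'X, hv'Z, hv'a⟩ w hwZ hwa
    have : v' = u := M.chromatic X hX v' hv'X u hvX (hv'a.trans hua.symm)
    subst this
    exact M.chromatic Z hZ w hwZ v' hv'Z (hwa.trans hv'a.symm)
  by_cases hval : (⟨a, p⟩ : Σ a : A, P a) ∈ M.val u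
  ·
    exact absurd ⟨⟨Y, hY, ⟨u, hvX, hvY, hua⟩, u, hvY, hua⟩,
        fun Z hZ hadj hdef => by
          obtain ⟨w, hwZ, hwa⟩ := hdef
          have := key Z hZ hadj w hwZ hwa
          subst this
          exact ⟨w, hwZ, hval⟩⟩ hnt1
  · -- then K_a ¬p is true, contradicting h2
    exact absurd ⟨⟨Y, hY, ⟨u, hvX, hvY, hua⟩, u, hvY, hua⟩,
      fun Z hZ hadj hdef => ⟨hdef, by
        rintro ⟨w, hwZ, hwv⟩
        have := key Z hZ hadj w hwZ (M.val_local w _ hwv).symm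
        subst this
        exact hval hwv⟩⟩ h2
end

section
/- Axiom T is valid: for every formula φ, agent a, simplicial model C and face X, if C,X ⋈ (K_a φ → φ) then C,X ⊨ K_a φ → φ. -/
/-- Axiom T `K_a φ → φ` is valid: true at every face where it is defined. -/
theorem axiomT_valid {A : Type} {P : A → Type}
    (M : SimplicialModel A P) (X : Finset M.V) (hX : X ∈ M.C)
    (a : A) (φ : Formula A P)
    (hD : Defin M (Formula.impl (.know a φ) φ) X) :
    Truth M (Formula.impl (.know a φ) φ) X := by
  refine ⟨hD, ?_⟩
  rintro ⟨⟨hDK, hK⟩, hDφ, hnφ⟩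
  obtain ⟨Y, _, ⟨v, hvX, _, hva⟩, _⟩ := hDK
  exact hnφ (hK X hX ⟨v, hvX, hvX, hva⟩ hDφ)
end

section
/- Axiom 5 is valid on simplicial models: if C,X ⊨ ¬K_a φ then C,X ⊨ K_a ¬K_a φ; moreover the implication ¬K_a φ → K_a ¬K_a φ is true at every face where it is defined. -/
lemma adj_trans {A : Type} {P : A → Type} (M : SimplicialModel A P)
    {a : A} {X Y Z : Finset M.V} (hX : X ∈ M.C)
    (h1 : adj M a X Y) (h2 : adj M a X Z) : adj M a Y Z := by
  obtain ⟨v, hvX, hvY, hv⟩ := h1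
  obtain ⟨w, hwX, hwZ, hw⟩ := h2
  have : v = w := M.chromatic X hX v hvX w hwX (hv.trans hw.symm)
  subst this
  exact ⟨v, hvY, hwZ, hv⟩

lemma part1 {A : Type} {P : A → Type}
    (M : SimplicialModel A P) (X : Finset M.V) (hX : X ∈ M.C)
    (a : A) (φ : Formula A P)
    (h : Truth M (.neg (.know a φ)) X) :
    Truth M (.know a (.neg (.know a φ))) X := by
  obtain ⟨hd, hnt⟩ := h
  -- hd : Defin M (.know a φ) X
  have hselfadj : adj M a X X := by
    obtain ⟨Z, _, ⟨v, hvX, _, hv⟩, _⟩ := hd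
    exact ⟨v, hvX, hvX, hv⟩
  refine ⟨⟨X, hX, hselfadj, hd⟩, ?_⟩
  intro Y hY hadj hdY
  refine ⟨hdY, ?_⟩
  rintro ⟨hdY', hall⟩
  apply hnt
  refine ⟨hd, ?_⟩
  intro Z hZ hadjXZ hdZ
  exact hall Z hZ (adj_trans M hX hadj hadjXZ) hdZ

/-- Axiom 5: if `¬K_a φ` is true then `K_a ¬K_a φ` is true; moreover the
implication `¬K_a φ → K_a ¬K_a φ` is true wherever it is defined. -/
theorem axiom5_valid {A : Type} {P : A → Type}
    (M : SimplicialModel A P) (X : Finset M.V) (hX : X ∈ M.C)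
    (a : A) (φ : Formula A P) :
    (Truth M (.neg (.know a φ)) X → Truth M (.know a (.neg (.know a φ))) X) ∧
    (Defin M (Formula.impl (.neg (.know a φ)) (.know a (.neg (.know a φ)))) X →
      Truth M (Formula.impl (.neg (.know a φ)) (.know a (.neg (.know a φ)))) X) := by
  constructor
  · exact part1 M X hX a φ
  · rintro ⟨hd1, hd2⟩
    refine ⟨⟨hd1, hd2⟩, ?_⟩
    rintro ⟨ht1, _, hnt2⟩
    exact hnt2 (part1 M X hX a φ ht1)
end

section
/- The axiom KK̂ is valid: for all φ, ψ, agent a, simplicial model C and face X where the formula is defined, C,X ⊨ K_a(φ→ψ) → (K_a φ → K̂_a ψ), where K̂_a ψ := ¬K_a ¬ψ. -/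
/-- Axiom KK̂ `K_a(φ→ψ) → (K_a φ → K̂_a ψ)` is valid, where `K̂_a ψ := ¬K_a ¬ψ`. -/
theorem axiomKKhat_valid {A : Type} {P : A → Type}
    (M : SimplicialModel A P) (X : Finset M.V) (hX : X ∈ M.C)
    (a : A) (φ ψ : Formula A P)
    (hD : Defin M (Formula.impl (.know a (Formula.impl φ ψ))
      (Formula.impl (.know a φ) (.neg (.know a (.neg ψ))))) X) :
    Truth M (Formula.impl (.know a (Formula.impl φ ψ))
      (Formula.impl (.know a φ) (.neg (.know a (.neg ψ))))) X := by
  simp only [Formula.impl, Defin, Truth] at *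
  obtain ⟨hdA, hdB⟩ := hD
  refine ⟨⟨hdA, hdB⟩, ?_⟩
  rintro ⟨h1, _, h2⟩
  apply h2; clear h2
  refine ⟨hdB, ?_⟩
  rintro ⟨hKφ, _, h3⟩
  apply h3; clear h3
  obtain ⟨⟨Y, hYC, hadj, hdφ, hdψ⟩, hK⟩ := h1
  have himpl := hK Y hYC hadj ⟨hdφ, hdψ⟩
  have hφ : Truth M φ Y := hKφ.2 Y hYC hadj hdφ
  -- himpl : Defin ∧ ¬(Truth φ Y ∧ (Defin ψ Y ∧ ¬ Truth ψ Y))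
  have hψ : Truth M ψ Y := by
    by_contra hnψ
    exact himpl.2 ⟨hφ, hdψ, hnψ⟩
  refine ⟨⟨Y, hYC, hadj, hdψ⟩, ?_⟩
  rintro ⟨_, hKnψ⟩
  exact (hKnψ Y hYC hadj hdψ).2 hψ
end

section
/- The restricted axiom K⋈ is valid: if ψ together with K_a φ definability-entail φ (i.e., at every face where both ψ and K_a φ are defined, φ is defined), then at every face X where K_a(φ→ψ) → (K_a φ → K_a ψ) is defined, it is true. -/
/-- The restricted axiom K⋈: if `ψ, K_a φ ⋉ φ`, then `K_a(φ→ψ) → (K_a φ → K_a ψ)`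
is true at every face where it is defined. -/
theorem axiomKrestricted_valid {A : Type} {P : A → Type}
    (a : A) (φ ψ : Formula A P)
    (hdef : ∀ (M : SimplicialModel A P), ∀ Z ∈ M.C,
      Defin M ψ Z → Defin M (.know a φ) Z → Defin M φ Z) :
    ∀ (M : SimplicialModel A P), ∀ X ∈ M.C,
      Defin M (Formula.impl (.know a (Formula.impl φ ψ))
        (Formula.impl (.know a φ) (.know a ψ))) X →
      Truth M (Formula.impl (.know a (Formula.impl φ ψ))
        (Formula.impl (.know a φ) (.know a ψ))) X := by
  have adj_trans : ∀ (M : SimplicialModel A P), ∀ X ∈ M.C, ∀ Y Z : Finset M.V,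
      adj M a X Y → adj M a X Z → adj M a Y Z := by
    rintro M X hX Y Z ⟨v, hvX, hvY, hva⟩ ⟨w, hwX, hwZ, hwa⟩
    have : v = w := M.chromatic X hX v hvX w hwX (hva.trans hwa.symm)
    exact ⟨v, hvY, this ▸ hwZ, hva⟩
  intro M X hX hD
  refine ⟨hD, ?_⟩
  rintro ⟨h1, hD2, h2⟩
  -- h1 : Truth M (K_a (φ→ψ)) X, h2 : ¬ Truth M (impl (K_a φ) (K_a ψ)) X
  apply h2
  refine ⟨hD2, ?_⟩
  rintro ⟨hKφ, hDKψ, hKψ⟩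
  apply hKψ
  refine ⟨(hDKψ : Defin M (.know a ψ) X), ?_⟩
  intro Y hY hadjY hDψY
  -- from Truth K_a φ X get a face Z with Defin φ Z and adj a X Z
  obtain ⟨⟨Z, hZ, hadjZ, hDφZ⟩, hKφ2⟩ := hKφ
  have hadjYZ : adj M a Y Z := adj_trans M X hX Y Z hadjY hadjZ
  have hDKφY : Defin M (.know a φ) Y := ⟨Z, hZ, hadjYZ, hDφZ⟩
  have hDφY : Defin M φ Y := hdef M Y hY hDψY hDKφY
  have hTφY : Truth M φ Y := hKφ2 Y hY hadjY hDφY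
  obtain ⟨_, h1⟩ := h1
  have hTimpl : Truth M (Formula.impl φ ψ) Y := h1 Y hY hadjY (show Defin M φ Y ∧ Defin M ψ Y from ⟨hDφY, hDψY⟩)
  obtain ⟨_, hni⟩ := hTimpl
  by_contra hnψ
  exact hni ⟨hTφY, hDψY, hnψ⟩
end

section
/- The restricted modus ponens rule preserves validity: if ψ is a definability consequence of φ (every face where ψ is defined also has φ defined), and both φ→ψ and φ are valid (true wherever defined), then ψ is valid (true wherever defined). -/
/-- The restricted modus ponens rule preserves validity, given `ψ ⋉ φ`. -/
theorem mp_restricted_preserves_validity {A : Type} {P : A → Type}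
    (φ ψ : Formula A P)
    (hdef : ∀ (M : SimplicialModel A P), ∀ X ∈ M.C, Defin M ψ X → Defin M φ X)
    (himp : ∀ (M : SimplicialModel A P), ∀ X ∈ M.C,
      Defin M (Formula.impl φ ψ) X → Truth M (Formula.impl φ ψ) X)
    (hphi : ∀ (M : SimplicialModel A P), ∀ X ∈ M.C, Defin M φ X → Truth M φ X) :
    ∀ (M : SimplicialModel A P), ∀ X ∈ M.C, Defin M ψ X → Truth M ψ X := by
  intro M X hX hψ
  have hφ := hdef M X hX hψ
  have hdi : Defin M (Formula.impl φ ψ) X := ⟨hφ, hψ⟩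
  have hti := himp M X hX hdi
  have htφ := hphi M X hX hφ
  by_contra hns
  exact hti.2 ⟨htφ, ⟨hψ, hns⟩⟩
end
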